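/- Let G : ℝ → ℝ be bounded, increasing, and left-continuous with lim_{x→−∞} G(x) = 0, and define y(ξ) = sup{x : x + G(x) < ξ}. Then y is increasing and Lipschitz continuous with Lipschitz constant 1, i.e., 0 ≤ y(ξ₂) − y(ξ₁) ≤ ξ₂ − ξ₁ for all ξ₁ ≤ ξ₂. -/

import Mathlib

open MeasureTheory Set Filter

section

variable {G : ℝ → ℝ}

lemma bddAbove_setOf_add_lt {m : ℝ} (hm : ∀ x, m ≤ G x) (ξ : ℝ) :
    BddAbove {x : ℝ | x + G x < ξ} :=
  ⟨ξ - m, fun x (hx : x + G x < ξ) => by linarith [hm x]⟩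

lemma nonempty_setOf_add_lt {M : ℝ} (hM : ∀ x, G x ≤ M) (ξ : ℝ) :
    {x : ℝ | x + G x < ξ}.Nonempty :=
  ⟨ξ - M - 1, show _ + _ < ξ by linarith [hM (ξ - M - 1)]⟩

lemma setOf_add_lt_subset {ξ₁ ξ₂ : ℝ} (h : ξ₁ ≤ ξ₂) :
    {x : ℝ | x + G x < ξ₁} ⊆ {x : ℝ | x + G x < ξ₂} :=
  fun _ hx => lt_of_lt_of_le hx h

/-- Since `G` is monotone, shifting a point of the level set `ξ + d` left by `d` lands in the
level set `ξ`. -/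
lemma sSup_setOf_add_lt_add_le (hG : Monotone G) {m M : ℝ} (hm : ∀ x, m ≤ G x)
    (hM : ∀ x, G x ≤ M) (ξ : ℝ) {d : ℝ} (hd : 0 ≤ d) :
    sSup {x : ℝ | x + G x < ξ + d} ≤ sSup {x : ℝ | x + G x < ξ} + d := by
  refine csSup_le (nonempty_setOf_add_lt hM _) fun x (hx : x + G x < ξ + d) => ?_
  have hshift : x - d + G (x - d) < ξ := by linarith [hG (sub_le_self x hd)]
  linarith [le_csSup (bddAbove_setOf_add_lt hm ξ) hshift]

end

theorem lagrangian_char_lipschitz_general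
    (G : ℝ → ℝ)
    (hbdd : ∃ M : ℝ, ∀ x, |G x| ≤ M)
    (hmono : Monotone G)
    (y : ℝ → ℝ) (hy : ∀ ξ, y ξ = sSup {x : ℝ | x + G x < ξ}) :
    ∀ ξ₁ ξ₂ : ℝ, ξ₁ ≤ ξ₂ → 0 ≤ y ξ₂ - y ξ₁ ∧ y ξ₂ - y ξ₁ ≤ ξ₂ - ξ₁ := by
  obtain ⟨M, hM⟩ := hbdd
  have hlower : ∀ x, -M ≤ G x := fun x => neg_le_of_abs_le (hM x)
  have hupper : ∀ x, G x ≤ M := fun x => le_of_abs_le (hM x)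
  intro ξ₁ ξ₂ hle
  rw [hy, hy]
  refine ⟨sub_nonneg.mpr ?_, sub_le_iff_le_add'.mpr ?_⟩
  · exact csSup_le_csSup (bddAbove_setOf_add_lt hlower ξ₂) (nonempty_setOf_add_lt hupper ξ₁)
      (setOf_add_lt_subset hle)
  · simpa only [add_sub_cancel] using
      sSup_setOf_add_lt_add_le hmono hlower hupper ξ₁ (sub_nonneg.mpr hle)

/-- For `G` bounded, increasing, left-continuous with `G → 0` at `−∞`, the function
`y(ξ) = sup{x : x + G(x) < ξ}` is increasing and `1`-Lipschitz:
`0 ≤ y(ξ₂) − y(ξ₁) ≤ ξ₂ − ξ₁` for all `ξ₁ ≤ ξ₂`. -/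
theorem lagrangian_char_lipschitz
    (G : ℝ → ℝ)
    (hbdd : ∃ M : ℝ, ∀ x, |G x| ≤ M)
    (hmono : Monotone G)
    (hleft : ∀ x : ℝ, ContinuousWithinAt G (Set.Iio x) x)
    (hlim : Tendsto G atBot (nhds 0))
    (y : ℝ → ℝ) (hy : ∀ ξ, y ξ = sSup {x : ℝ | x + G x < ξ}) :
    ∀ ξ₁ ξ₂ : ℝ, ξ₁ ≤ ξ₂ → 0 ≤ y ξ₂ - y ξ₁ ∧ y ξ₂ - y ξ₁ ≤ ξ₂ - ξ₁ :=
  lagrangian_char_lipschitz_general G hbdd hmono y hy
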